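/- For all i ≥ 2 and n ≥ 1, the word Φ(f_n^[i]) obtained from f_n^[i] by deleting its last two symbols is a palindrome (for n ≥ 2; for n=1 when i ≥ 2). -/
import Mathlib


/-- The (n,i)-Fibonacci words: f_0^[i] = 0, f_1^[i] = 0^{i-1} 1, f_n^[i] = f_{n-1}^[i] f_{n-2}^[i]. -/
def genFibWord (i : ℕ) : ℕ → List ℕ
  | 0 => [0]
  | 1 => List.replicate (i - 1) 0 ++ [1]
  | n + 2 => genFibWord i (n + 1) ++ genFibWord i n

/-- Φ deletes the last two symbols of a word. -/
def Phi (w : List ℕ) : List ℕ := w.dropLast.dropLast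

/-- The last two letters of f_n: [0,1] for odd n, [1,0] for even n. -/
def Etwo (n : ℕ) : List ℕ := if n % 2 = 1 then [0, 1] else [1, 0]

lemma phi_appE (x : List ℕ) (n : ℕ) : Phi (x ++ Etwo n) = x := by
  unfold Phi Etwo
  split <;> simp

lemma etwo_succ_rev (m : ℕ) : (Etwo (m + 1)).reverse = Etwo m := by
  unfold Etwo
  rcases Nat.mod_two_eq_zero_or_one m with h | h
  · rw [if_pos (show (m + 1) % 2 = 1 by omega), if_neg (show ¬ m % 2 = 1 by omega)]
    simp
  · rw [if_neg (show ¬ (m + 1) % 2 = 1 by omega), if_pos h]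
    simp

lemma gf_suffix (i : ℕ) (hi : 2 ≤ i) :
    ∀ n, 1 ≤ n → genFibWord i n = Phi (genFibWord i n) ++ Etwo n := by
  have ex : ∀ n, 1 ≤ n → ∃ x, genFibWord i n = x ++ Etwo n := by
    intro n
    induction n using Nat.strong_induction_on with
    | _ n ih =>
      match n with
      | 0 => intro h; omega
      | 1 =>
        intro _
        refine ⟨List.replicate (i - 2) 0, ?_⟩
        show List.replicate (i - 1) 0 ++ [1] = _
        rw [show i - 1 = (i - 2) + 1 from by omega, List.replicate_succ']
        simp [Etwo]
      | 2 =>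
        intro _
        refine ⟨List.replicate (i - 1) 0, ?_⟩
        show (List.replicate (i - 1) 0 ++ [1]) ++ [0] = _
        simp [Etwo]
      | (m + 3) =>
        intro _
        obtain ⟨x, hx⟩ := ih (m + 1) (by omega) (by omega)
        refine ⟨genFibWord i (m + 2) ++ x, ?_⟩
        show genFibWord i (m + 2) ++ genFibWord i (m + 1) = _
        rw [hx]
        have hE : Etwo (m + 3) = Etwo (m + 1) := by
          unfold Etwo
          rw [show (m + 3) % 2 = (m + 1) % 2 from by omega]
        rw [hE, List.append_assoc]
  intro n hn
  obtain ⟨x, hx⟩ := ex n hn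
  have : Phi (genFibWord i n) = x := by rw [hx, phi_appE]
  rw [this, ← hx]

lemma phi_step (i : ℕ) (hi : 2 ≤ i) (m : ℕ) (hm : 1 ≤ m) :
    Phi (genFibWord i (m + 2)) = genFibWord i (m + 1) ++ Phi (genFibWord i m) := by
  have h1 := gf_suffix i hi m hm
  show Phi (genFibWord i (m + 1) ++ genFibWord i m) = _
  conv_lhs => rw [h1]
  rw [← List.append_assoc, phi_appE]

lemma phi_g1 (i : ℕ) (hi : 2 ≤ i) : Phi (genFibWord i 1) = List.replicate (i - 2) 0 := by
  show Phi (List.replicate (i - 1) 0 ++ [1]) = _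
  rw [show i - 1 = (i - 2) + 1 from by omega, List.replicate_succ']
  show Phi ((List.replicate (i - 2) 0 ++ [0]) ++ [1]) = _
  have : (List.replicate (i - 2) 0 ++ [0]) ++ [1] = List.replicate (i - 2) 0 ++ Etwo 1 := by
    simp [Etwo]
  rw [this, phi_appE]

lemma phi_g2 (i : ℕ) (hi : 2 ≤ i) : Phi (genFibWord i 2) = List.replicate (i - 1) 0 := by
  show Phi ((List.replicate (i - 1) 0 ++ [1]) ++ [0]) = _
  have : (List.replicate (i - 1) 0 ++ [1]) ++ [0] = List.replicate (i - 1) 0 ++ Etwo 2 := by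
    simp [Etwo]
  rw [this, phi_appE]

lemma comm_lemma (i : ℕ) (hi : 2 ≤ i) :
    ∀ n, 1 ≤ n → genFibWord i n ++ Phi (genFibWord i (n + 1)) =
      genFibWord i (n + 1) ++ Phi (genFibWord i n) := by
  intro n
  induction n with
  | zero => intro h; omega
  | succ m ih =>
    intro _
    rcases Nat.eq_zero_or_pos m with rfl | hm
    · -- base case n = 1
      rw [phi_g1 i hi, phi_g2 i hi]
      show (List.replicate (i - 1) 0 ++ [1]) ++ List.replicate (i - 1) 0 =
        ((List.replicate (i - 1) 0 ++ [1]) ++ [0]) ++ List.replicate (i - 2) 0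
      rw [List.append_assoc ((List.replicate (i - 1) 0 ++ [1])) [0]]
      congr 1
      rw [show i - 1 = (i - 2) + 1 from by omega, List.replicate_succ]
      rfl
    · have C := ih hm
      rw [phi_step i hi m hm]
      show genFibWord i (m + 1) ++ (genFibWord i (m + 1) ++ Phi (genFibWord i m)) =
        (genFibWord i (m + 1) ++ genFibWord i m) ++ Phi (genFibWord i (m + 1))
      rw [List.append_assoc, C]

/-- Φ(f_n^[i]) is a palindrome. -/
theorem stmt_5 (i : ℕ) (hi : 2 ≤ i) (n : ℕ) (hn : 1 ≤ n) :
    (Phi (genFibWord i n)).reverse = Phi (genFibWord i n) := by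
  induction n using Nat.strong_induction_on with
  | _ n ih =>
    match n with
    | 0 => omega
    | 1 => rw [phi_g1 i hi]; simp
    | 2 => rw [phi_g2 i hi]; simp
    | (m + 3) =>
      have P1 : (Phi (genFibWord i (m + 1))).reverse = Phi (genFibWord i (m + 1)) :=
        ih (m + 1) (by omega) (by omega)
      have P2 : (Phi (genFibWord i (m + 2))).reverse = Phi (genFibWord i (m + 2)) :=
        ih (m + 2) (by omega) (by omega)
      have key : Phi (genFibWord i (m + 3)) =
          genFibWord i (m + 2) ++ Phi (genFibWord i (m + 1)) :=
        phi_step i hi (m + 1) (by omega)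
      rw [key, List.reverse_append, P1]
      conv_lhs => rw [gf_suffix i hi (m + 2) (by omega)]
      rw [List.reverse_append, P2, etwo_succ_rev, ← List.append_assoc,
        ← gf_suffix i hi (m + 1) (by omega), comm_lemma i hi (m + 1) (by omega)]
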